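/- arXiv:2009.04188 — 2 statements merged into one kernel-verified Lean document; each statement's English description precedes it below -/
import Mathlib

section
/- Let F = F₁ × ⋯ × F_d with each F_i ⊆ [0,1] closed containing 0 and 1, and let f : [0,1]^d → ℝ be continuous such that for every i and every fixed t_{∼i} ∈ [0,1]^{d−1}, the map u_i ↦ f(u_i, t_{∼i}) is convex. Then P_{F→[0,1]^d}(f|_F) also has all its one-dimensional cuts convex. -/
open Set
open scoped Classical

/-- Closest left neighbor of `t` in `B`. -/
noncomputable def leftN (B : Set ℝ) (t : ℝ) : ℝ := sSup {u ∈ B | u ≤ t}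

/-- Closest right neighbor of `t` in `B`. -/
noncomputable def rightN (B : Set ℝ) (t : ℝ) : ℝ := sInf {u ∈ B | t ≤ u}

/-- The affine extension `L_B g` of a function `g` defined on `B` to `[0,1]`. -/
noncomputable def affExt (B : Set ℝ) (g : ℝ → ℝ) (t : ℝ) : ℝ :=
  if t ∈ B then g t
  else (1 - (t - leftN B t) / (rightN B t - leftN B t)) * g (leftN B t)
    + (t - leftN B t) / (rightN B t - leftN B t) * g (rightN B t)

/-- Neighbor `t^ε` of `t` in `Fi` (with the convention `t^- = t^+ = t` for `t ∈ Fi`). -/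
noncomputable def nbr (Fi : Set ℝ) (t : ℝ) (ε : Bool) : ℝ :=
  if t ∈ Fi then t else if ε then rightN Fi t else leftN Fi t

/-- Weight `ω_ε(t)` (with the convention `ω_-(t) = ω_+(t) = 1/2` for `t ∈ Fi`). -/
noncomputable def wt (Fi : Set ℝ) (t : ℝ) (ε : Bool) : ℝ :=
  if t ∈ Fi then 1/2
  else if ε then (t - leftN Fi t) / (rightN Fi t - leftN Fi t)
  else 1 - (t - leftN Fi t) / (rightN Fi t - leftN Fi t)

/-- The multiaffine extension `P_{F → [0,1]^d}(f)`, via its explicit formula. -/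
noncomputable def multiExt {d : ℕ} (F : Fin d → Set ℝ) (f : (Fin d → ℝ) → ℝ)
    (t : Fin d → ℝ) : ℝ :=
  ∑ ε : Fin d → Bool, (∏ j, wt (F j) (t j) (ε j)) * f (fun j => nbr (F j) (t j) (ε j))

/-- The unit cube `[0,1]^d`. -/
def cube (d : ℕ) : Set (Fin d → ℝ) := Set.pi Set.univ fun _ => Set.Icc (0:ℝ) 1

/-!
Along the direction `i`, the multiaffine extension splits as a sum, over the choices `η` of
neighbours in the other coordinates, of nonnegative weights times the one-dimensional affine
extension `affExt (F i)` of a cut of `f`; so it suffices that `affExt B g` is convex when `g` is.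
Now `affExt B g` lies above `g`, and below each of its own secants over `[x, y]`: at points of `B`
because `g` lies below that secant, and inside a gap `(l, r)` of `B` because `affExt B g` is affine
on `[l, r]` and lies below the secant at both ends of `[max l x, min r y]`.
-/

section Neighbors

variable {B : Set ℝ} {t : ℝ}

lemma leftN_mem (hc : IsClosed B) (h0 : (0:ℝ) ∈ B) (ht : 0 ≤ t) : leftN B t ∈ B :=
  ((hc.inter isClosed_Iic).csSup_mem ⟨0, h0, ht⟩ ⟨t, fun _ hu => hu.2⟩).1

lemma leftN_le (h0 : (0:ℝ) ∈ B) (ht : 0 ≤ t) : leftN B t ≤ t :=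
  csSup_le ⟨0, h0, ht⟩ fun _ hu => hu.2

lemma le_leftN {u : ℝ} (hu : u ∈ B) (hut : u ≤ t) : u ≤ leftN B t :=
  le_csSup ⟨t, fun _ hv => hv.2⟩ ⟨hu, hut⟩

lemma rightN_mem (hc : IsClosed B) (h1 : (1:ℝ) ∈ B) (ht : t ≤ 1) : rightN B t ∈ B :=
  ((hc.inter isClosed_Ici).csInf_mem ⟨1, h1, ht⟩ ⟨t, fun _ hu => hu.2⟩).1

lemma le_rightN (h1 : (1:ℝ) ∈ B) (ht : t ≤ 1) : t ≤ rightN B t :=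
  le_csInf ⟨1, h1, ht⟩ fun _ hu => hu.2

lemma rightN_le {u : ℝ} (hu : u ∈ B) (htu : t ≤ u) : rightN B t ≤ u :=
  csInf_le ⟨t, fun _ hv => hv.2⟩ ⟨hu, htu⟩

lemma leftN_lt (hc : IsClosed B) (h0 : (0:ℝ) ∈ B) (ht : 0 ≤ t) (htB : t ∉ B) :
    leftN B t < t :=
  (leftN_le h0 ht).lt_of_ne fun h => htB (h ▸ leftN_mem hc h0 ht)

lemma lt_rightN (hc : IsClosed B) (h1 : (1:ℝ) ∈ B) (ht : t ≤ 1) (htB : t ∉ B) :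
    t < rightN B t :=
  (le_rightN h1 ht).lt_of_ne' fun h => htB (h ▸ rightN_mem hc h1 ht)

lemma notMem_of_leftN_lt_of_lt_rightN {s : ℝ} (hl : leftN B t < s) (hr : s < rightN B t) :
    s ∉ B := fun hs =>
  (le_total s t).elim (fun h => (le_leftN hs h).not_gt hl) fun h => (rightN_le hs h).not_gt hr

lemma leftN_eq_of_mem_gap (hc : IsClosed B) (h0 : (0:ℝ) ∈ B) (ht : 0 ≤ t) {s : ℝ}
    (hl : leftN B t < s) (hr : s < rightN B t) : leftN B s = leftN B t :=
  le_antisymm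
    (csSup_le ⟨_, leftN_mem hc h0 ht, hl.le⟩ fun _ hu =>
      not_lt.1 fun hlu => notMem_of_leftN_lt_of_lt_rightN hlu (hu.2.trans_lt hr) hu.1)
    (le_leftN (leftN_mem hc h0 ht) hl.le)

lemma rightN_eq_of_mem_gap (hc : IsClosed B) (h1 : (1:ℝ) ∈ B) (ht : t ≤ 1) {s : ℝ}
    (hl : leftN B t < s) (hr : s < rightN B t) : rightN B s = rightN B t :=
  le_antisymm (rightN_le (rightN_mem hc h1 ht) hr.le)
    (le_csInf ⟨_, rightN_mem hc h1 ht, hr.le⟩ fun _ hu =>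
      not_lt.1 fun hur => notMem_of_leftN_lt_of_lt_rightN (hl.trans_le hu.2) hur hu.1)

lemma wt_nonneg (h0 : (0:ℝ) ∈ B) (h1 : (1:ℝ) ∈ B) (ht : t ∈ Icc (0:ℝ) 1) (ε : Bool) :
    0 ≤ wt B t ε := by
  have hl := leftN_le h0 ht.1
  have hr := le_rightN h1 ht.2
  unfold wt
  split_ifs
  · norm_num
  · exact div_nonneg (sub_nonneg.2 hl) (by linarith)
  · exact sub_nonneg.2 (div_le_one_of_le₀ (by linarith) (by linarith))

lemma nbr_mem_Icc (hB : B ⊆ Icc (0:ℝ) 1) (hc : IsClosed B) (h0 : (0:ℝ) ∈ B) (h1 : (1:ℝ) ∈ B)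
    (ht : t ∈ Icc (0:ℝ) 1) (ε : Bool) : nbr B t ε ∈ Icc (0:ℝ) 1 := by
  unfold nbr
  split_ifs
  · exact ht
  · exact hB (rightN_mem hc h1 ht.2)
  · exact hB (leftN_mem hc h0 ht.1)

end Neighbors

noncomputable def secant (f : ℝ → ℝ) (x y s : ℝ) : ℝ := f x + (s - x) * slope f x y

section Secant

variable {f : ℝ → ℝ} {x y : ℝ}

lemma secant_left : secant f x y x = f x := by simp [secant]

lemma secant_right : secant f x y y = f y := by
  rw [secant, ← smul_eq_mul, sub_smul_slope, vsub_eq_sub, add_sub_cancel]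

lemma secant_smul_add_smul {p q a b : ℝ} (hab : a + b = 1) :
    secant f x y (a • p + b • q) = a • secant f x y p + b • secant f x y q := by
  simp only [secant, smul_eq_mul]
  linear_combination (x * slope f x y - f x) * hab

lemma convexOn_secant {s : Set ℝ} (hs : Convex ℝ s) : ConvexOn ℝ s (secant f x y) :=
  ⟨hs, fun _ _ _ _ _ _ _ _ hab => (secant_smul_add_smul hab).le⟩

lemma ConvexOn.le_secant_of_le_of_le {g : ℝ → ℝ} {p q w : ℝ} (hg : ConvexOn ℝ (Icc p q) g)
    (hp : g p ≤ secant f x y p) (hq : g q ≤ secant f x y q) (hw : w ∈ Icc p q) :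
    g w ≤ secant f x y w := by
  have hpq : p ≤ q := hw.1.trans hw.2
  obtain ⟨a, b, ha, hb, hab, rfl⟩ : w ∈ segment ℝ p q := by rwa [segment_eq_Icc hpq]
  calc g (a • p + b • q) ≤ a • g p + b • g q :=
        hg.2 (left_mem_Icc.2 hpq) (right_mem_Icc.2 hpq) ha hb hab
    _ ≤ a • secant f x y p + b • secant f x y q := by gcongr
    _ = secant f x y (a • p + b • q) := (secant_smul_add_smul hab).symm

end Secant

lemma convexOn_sum {𝕜 E β ι : Type*} [Semiring 𝕜] [PartialOrder 𝕜] [AddCommMonoid E]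
    [AddCommMonoid β] [PartialOrder β] [IsOrderedAddMonoid β] [SMul 𝕜 E] [Module 𝕜 β]
    {s : Set E} (hs : Convex 𝕜 s) {t : Finset ι} {φ : ι → E → β}
    (h : ∀ i ∈ t, ConvexOn 𝕜 s (φ i)) : ConvexOn 𝕜 s fun x => ∑ i ∈ t, φ i x := by
  simpa only [Finset.sum_fn] using
    Finset.sum_induction φ (ConvexOn 𝕜 s) (fun _ _ => ConvexOn.add) (convexOn_const 0 hs) h

section AffExt

variable {B : Set ℝ} {g : ℝ → ℝ}

lemma affExt_of_mem {s : ℝ} (hs : s ∈ B) : affExt B g s = g s := if_pos hs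

lemma affExt_eqOn_gap (hc : IsClosed B) (h0 : (0:ℝ) ∈ B) (h1 : (1:ℝ) ∈ B) {t : ℝ}
    (ht : t ∈ Icc (0:ℝ) 1) :
    EqOn (affExt B g) (secant g (leftN B t) (rightN B t)) (Icc (leftN B t) (rightN B t)) := by
  rintro s ⟨hls, hsr⟩
  rcases hls.eq_or_lt with rfl | hls
  · rw [affExt_of_mem (leftN_mem hc h0 ht.1), secant_left]
  rcases hsr.eq_or_lt with rfl | hsr
  · rw [affExt_of_mem (rightN_mem hc h1 ht.2), secant_right]
  have hlr : leftN B t < rightN B t := hls.trans hsr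
  rw [affExt, if_neg (notMem_of_leftN_lt_of_lt_rightN hls hsr),
    leftN_eq_of_mem_gap hc h0 ht.1 hls hsr, rightN_eq_of_mem_gap hc h1 ht.2 hls hsr, secant,
    slope_def_field]
  field_simp [sub_ne_zero.2 hlr.ne']
  ring

lemma le_affExt (hB : B ⊆ Icc (0:ℝ) 1) (hc : IsClosed B) (h0 : (0:ℝ) ∈ B)
    (h1 : (1:ℝ) ∈ B) (hg : ConvexOn ℝ (Icc (0:ℝ) 1) g) {s : ℝ}
    (hs : s ∈ Icc (0:ℝ) 1) : g s ≤ affExt B g s := by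
  by_cases hsB : s ∈ B
  · rw [affExt_of_mem hsB]
  have hl := leftN_mem hc h0 hs.1
  have hr := rightN_mem hc h1 hs.2
  rw [affExt_eqOn_gap hc h0 h1 hs ⟨leftN_le h0 hs.1, le_rightN h1 hs.2⟩]
  exact (hg.subset (Icc_subset_Icc (hB hl).1 (hB hr).2) (convex_Icc _ _)).le_secant_of_le_of_le
    secant_left.ge secant_right.ge ⟨leftN_le h0 hs.1, le_rightN h1 hs.2⟩

lemma affExt_le_secant (hB : B ⊆ Icc (0:ℝ) 1) (hc : IsClosed B) (h0 : (0:ℝ) ∈ B)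
    (h1 : (1:ℝ) ∈ B) (hg : ConvexOn ℝ (Icc (0:ℝ) 1) g)
    {x y w : ℝ} (hx : x ∈ Icc (0:ℝ) 1) (hy : y ∈ Icc (0:ℝ) 1) (hw : w ∈ Icc x y) :
    affExt B g w ≤ secant (affExt B g) x y w := by
  have hxy : Icc x y ⊆ Icc 0 1 := Icc_subset_Icc hx.1 hy.2
  have hg_le : ∀ s ∈ Icc x y, g s ≤ secant (affExt B g) x y s :=
    fun s => (hg.subset hxy (convex_Icc x y)).le_secant_of_le_of_le
      (secant_left.symm ▸ le_affExt hB hc h0 h1 hg hx)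
      (secant_right.symm ▸ le_affExt hB hc h0 h1 hg hy)
  by_cases hwB : w ∈ B
  · exact affExt_of_mem hwB ▸ hg_le w hw
  have hw01 := hxy hw
  have hl := leftN_mem hc h0 hw01.1
  have hr := rightN_mem hc h1 hw01.2
  have hlw := leftN_lt hc h0 hw01.1 hwB
  have hwr := lt_rightN hc h1 hw01.2 hwB
  have hconv : ConvexOn ℝ (Icc (max (leftN B w) x) (min (rightN B w) y)) (affExt B g) :=
    ((convexOn_secant (convex_Icc _ _)).congr (affExt_eqOn_gap hc h0 h1 hw01).symm).subset
      (Icc_subset_Icc (le_max_left _ _) (min_le_left _ _)) (convex_Icc _ _)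
  refine hconv.le_secant_of_le_of_le ?_ ?_ ⟨max_le hlw.le hw.1, le_min hwr.le hw.2⟩
  · rcases max_choice (leftN B w) x with hp | hp <;> rw [hp]
    · exact affExt_of_mem hl ▸ hg_le _ ⟨hp ▸ le_max_right _ _, hlw.le.trans hw.2⟩
    · rw [secant_left]
  · rcases min_choice (rightN B w) y with hq | hq <;> rw [hq]
    · exact affExt_of_mem hr ▸ hg_le _ ⟨hw.1.trans hwr.le, hq ▸ min_le_right _ _⟩
    · rw [secant_right]

lemma affExt_convexOn (hB : B ⊆ Icc (0:ℝ) 1) (hc : IsClosed B) (h0 : (0:ℝ) ∈ B)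
    (h1 : (1:ℝ) ∈ B) (hg : ConvexOn ℝ (Icc (0:ℝ) 1) g) :
    ConvexOn ℝ (Icc (0:ℝ) 1) (affExt B g) :=
  LinearOrder.convexOn_of_lt (convex_Icc 0 1) fun x hx y hy hxy a b ha hb hab =>
    calc affExt B g (a • x + b • y) ≤ secant (affExt B g) x y (a • x + b • y) :=
          affExt_le_secant hB hc h0 h1 hg hx hy <| by
            rw [← segment_eq_Icc hxy.le]; exact ⟨a, b, ha.le, hb.le, hab, rfl⟩
      _ = a • affExt B g x + b • affExt B g y := by
          rw [secant_smul_add_smul hab, secant_left, secant_right]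

end AffExt

lemma affExt_eq_sum_wt (B : Set ℝ) (g : ℝ → ℝ) (u : ℝ) :
    affExt B g u = ∑ b : Bool, wt B u b * g (nbr B u b) := by
  by_cases hu : u ∈ B
  · simp only [Fintype.sum_bool, wt, nbr, affExt, if_pos hu]
    ring
  · simp [wt, nbr, affExt, hu, add_comm]

lemma Fintype.sum_eq_sum_funSplitAt {ι β M : Type*} [Fintype ι] [DecidableEq ι] [Fintype β]
    [AddCommMonoid M] (i : ι) (Φ : (ι → β) → M) :
    ∑ ε, Φ ε = ∑ η : {j // j ≠ i} → β, ∑ b, Φ ((Equiv.funSplitAt i β).symm (b, η)) := by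
  rw [← (Equiv.funSplitAt i β).symm.sum_comp, Fintype.sum_prod_type, Finset.sum_comm]

lemma multiExt_update {d : ℕ} (F : Fin d → Set ℝ) (f : (Fin d → ℝ) → ℝ) (t : Fin d → ℝ)
    (i : Fin d) (u : ℝ) :
    multiExt F f (Function.update t i u) =
      ∑ η : {j // j ≠ i} → Bool, (∏ j : {j // j ≠ i}, wt (F j) (t j) (η j)) *
        affExt (F i) (fun v => f (Function.update
          ((Equiv.funSplitAt i ℝ).symm (t i, fun j => nbr (F j) (t j) (η j))) i v)) u := by
  rw [multiExt, Fintype.sum_eq_sum_funSplitAt i]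
  refine Finset.sum_congr rfl fun η _ => ?_
  rw [affExt_eq_sum_wt, Finset.mul_sum]
  refine Finset.sum_congr rfl fun b _ => ?_
  rw [Fintype.prod_eq_mul_prod_subtype_ne _ i]
  have hpoint : (fun j => nbr (F j) (Function.update t i u j)
      ((Equiv.funSplitAt i Bool).symm (b, η) j)) = Function.update
        ((Equiv.funSplitAt i ℝ).symm (t i, fun j => nbr (F j) (t j) (η j))) i (nbr (F i) u b) := by
    ext j
    rcases eq_or_ne j i with rfl | hj
    · simp
    · simp [hj]
  have hprod : ∀ j : {j // j ≠ i}, wt (F j) (Function.update t i u j)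
      ((Equiv.funSplitAt i Bool).symm (b, η) j) = wt (F j) (t j) (η j) := fun j => by
    simp [j.2]
  rw [hpoint, Fintype.prod_congr _ _ hprod, Function.update_self, Equiv.funSplitAt_symm_apply,
    dif_pos rfl]
  ring

theorem stmt15_general (d : ℕ) (F : Fin d → Set ℝ)
    (hFsub : ∀ i, F i ⊆ Set.Icc (0:ℝ) 1) (hFc : ∀ i, IsClosed (F i))
    (h0 : ∀ i, (0:ℝ) ∈ F i) (h1 : ∀ i, (1:ℝ) ∈ F i)
    (f : (Fin d → ℝ) → ℝ)
    (hconv : ∀ i : Fin d, ∀ t ∈ cube d,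
      ConvexOn ℝ (Set.Icc (0:ℝ) 1) (fun u => f (Function.update t i u))) :
    ∀ i : Fin d, ∀ t ∈ cube d,
      ConvexOn ℝ (Set.Icc (0:ℝ) 1) (fun u => multiExt F f (Function.update t i u)) := by
  intro i t ht
  have ht' : ∀ j, t j ∈ Icc (0:ℝ) 1 := fun j => ht j (mem_univ j)
  simp only [multiExt_update]
  refine convexOn_sum (convex_Icc 0 1) fun η _ => ConvexOn.smul
    (Finset.prod_nonneg fun j _ => wt_nonneg (h0 j) (h1 j) (ht' j) (η j))
    (affExt_convexOn (hFsub i) (hFc i) (h0 i) (h1 i) (hconv i _ fun j _ => ?_))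
  rw [Equiv.funSplitAt_symm_apply]
  split_ifs with hj
  · exact hj ▸ ht' i
  · exact nbr_mem_Icc (hFsub j) (hFc j) (h0 j) (h1 j) (ht' j) _

/-- if all one-dimensional cuts of a continuous `f` are convex, then so are
all one-dimensional cuts of the multiaffine extension of its restriction to `F`. -/
theorem stmt15 (d : ℕ) (hd : 1 ≤ d) (F : Fin d → Set ℝ)
    (hFsub : ∀ i, F i ⊆ Set.Icc (0:ℝ) 1) (hFc : ∀ i, IsClosed (F i))
    (h0 : ∀ i, (0:ℝ) ∈ F i) (h1 : ∀ i, (1:ℝ) ∈ F i)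
    (f : (Fin d → ℝ) → ℝ) (hf : ContinuousOn f (cube d))
    (hconv : ∀ i : Fin d, ∀ t ∈ cube d,
      ConvexOn ℝ (Set.Icc (0:ℝ) 1) (fun u => f (Function.update t i u))) :
    ∀ i : Fin d, ∀ t ∈ cube d,
      ConvexOn ℝ (Set.Icc (0:ℝ) 1) (fun u => multiExt F f (Function.update t i u)) :=
  stmt15_general d F hFsub hFc h0 h1 f hconv
end

section
/- Let B be a closed subset of [0,1] containing 0 and 1, let f : B → ℝ be continuous, and consider a nested sequence (B_m) of finite subsets of B each containing 0 and 1 whose union is dense in B. Then the affine extensions L_{B_m}(f|_{B_m}) converge uniformly on [0,1] to L_B f as m → ∞. -/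
open Set
open scoped Classical

lemma leftN_spec {B : Set ℝ} {t : ℝ} (hB : IsClosed B) (h0 : (0:ℝ) ∈ B) (ht : 0 ≤ t) :
    leftN B t ∈ B ∧ leftN B t ≤ t ∧ ∀ u ∈ B, u ≤ t → u ≤ leftN B t := by
  have hne : ({u ∈ B | u ≤ t}).Nonempty := ⟨0, h0, ht⟩
  have hbd : BddAbove {u ∈ B | u ≤ t} := ⟨t, fun u hu => hu.2⟩
  have hcl : IsClosed {u ∈ B | u ≤ t} := by
    have heq : {u ∈ B | u ≤ t} = B ∩ Iic t := rfl
    rw [heq]; exact hB.inter isClosed_Iic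
  have hmem := hcl.csSup_mem hne hbd
  exact ⟨hmem.1, hmem.2, fun u hu hut => le_csSup hbd ⟨hu, hut⟩⟩

lemma rightN_spec {B : Set ℝ} {t : ℝ} (hB : IsClosed B) (h1 : (1:ℝ) ∈ B) (ht : t ≤ 1) :
    rightN B t ∈ B ∧ t ≤ rightN B t ∧ ∀ u ∈ B, t ≤ u → rightN B t ≤ u := by
  have hne : ({u ∈ B | t ≤ u}).Nonempty := ⟨1, h1, ht⟩
  have hbd : BddBelow {u ∈ B | t ≤ u} := ⟨t, fun u hu => hu.2⟩
  have hcl : IsClosed {u ∈ B | t ≤ u} := by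
    have heq : {u ∈ B | t ≤ u} = B ∩ Ici t := rfl
    rw [heq]; exact hB.inter isClosed_Ici
  have hmem := hcl.csInf_mem hne hbd
  exact ⟨hmem.1, hmem.2, fun u hu hut => csInf_le hbd ⟨hu, hut⟩⟩

lemma twoscale {f : ℝ → ℝ} {B : Set ℝ} {M ε δ η : ℝ}
    (hM : ∀ x ∈ B, |f x| ≤ M) (hM0 : 0 ≤ M)
    (hδ : ∀ x ∈ B, ∀ y ∈ B, |x - y| ≤ δ → |f x - f y| ≤ ε)
    (hη2 : η * (2 * M) ≤ ε * δ) (hδpos : 0 < δ) (hε0 : 0 ≤ ε)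
    {x y θ D K : ℝ} (hx : x ∈ B) (hy : y ∈ B) (hxy : |x - y| ≤ D)
    (hθ0 : 0 ≤ θ) (hθ1 : θ ≤ 1) (hθD : θ * D ≤ K * η) (hK : 1 ≤ K) :
    θ * |f x - f y| ≤ K * ε := by
  rcases le_or_gt D δ with hD | hD
  · have h1 : |f x - f y| ≤ ε := hδ x hx y hy (hxy.trans hD)
    nlinarith [abs_nonneg (f x - f y)]
  · have hDpos : 0 < D := hδpos.trans hD
    have hfb : |f x - f y| ≤ 2 * M := by
      obtain ⟨ha, hb⟩ := abs_le.mp (hM x hx)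
      obtain ⟨hc, hd⟩ := abs_le.mp (hM y hy)
      rw [abs_le]; constructor <;> linarith
    have key : θ * (2*M) ≤ K * ε := by
      have h2 : (θ*D)*(2*M) ≤ (K*η)*(2*M) := mul_le_mul_of_nonneg_right hθD (by linarith)
      have h4 : K*(η*(2*M)) ≤ K*(ε*δ) := mul_le_mul_of_nonneg_left hη2 (by linarith)
      have h5 : (K*ε)*δ ≤ (K*ε)*D := mul_le_mul_of_nonneg_left hD.le (mul_nonneg (by linarith) hε0)
      have h6 : θ*(2*M)*D ≤ (K*ε)*D := by nlinarith
      exact le_of_mul_le_mul_right h6 hDpos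
    calc θ * |f x - f y| ≤ θ * (2*M) := mul_le_mul_of_nonneg_left hfb hθ0
      _ ≤ K * ε := key

lemma scale_abs {a θ ε : ℝ} (h : a ≤ ε) (h0 : 0 ≤ a) (hθ0 : 0 ≤ θ) (hθ1 : θ ≤ 1) :
    θ * a ≤ ε := by nlinarith


set_option maxHeartbeats 1000000 in
lemma key {B C : Set ℝ} (hBc : IsClosed B)
    (hCB : C ⊆ B) (hCc : IsClosed C) (h0C : (0:ℝ) ∈ C) (h1C : (1:ℝ) ∈ C)
    {f : ℝ → ℝ} {M ε δ η : ℝ} (hM0 : 0 ≤ M) (hM : ∀ x ∈ B, |f x| ≤ M)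
    (hδpos : 0 < δ) (hε0 : 0 ≤ ε)
    (hδ : ∀ x ∈ B, ∀ y ∈ B, |x - y| ≤ δ → |f x - f y| ≤ ε)
    (hη1 : η ≤ δ) (hη2 : η * (2*M) ≤ ε * δ)
    (hdense : ∀ b ∈ B, ∃ p ∈ C, |p - b| ≤ η)
    {t : ℝ} (ht0 : 0 ≤ t) (ht1 : t ≤ 1) :
    |affExt C f t - affExt B f t| ≤ 5 * ε := by
  have h0B : (0:ℝ) ∈ B := hCB h0C
  have h1B : (1:ℝ) ∈ B := hCB h1C
  by_cases htC : t ∈ C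
  · have htB : t ∈ B := hCB htC
    simp only [affExt, if_pos htC, if_pos htB, sub_self, abs_zero]
    linarith
  · obtain ⟨hcC, hct, hcmax⟩ := leftN_spec hCc h0C ht0
    obtain ⟨hdC, htd, hdmin⟩ := rightN_spec hCc h1C ht1
    set c := leftN C t with hc
    set d := rightN C t with hd
    have hcB : c ∈ B := hCB hcC
    have hdB : d ∈ B := hCB hdC
    have hclt : c < t := lt_of_le_of_ne hct (fun h => htC (h ▸ hcC))
    have htld : t < d := lt_of_le_of_ne htd (fun h => htC (h ▸ hdC))
    have hdc : (0:ℝ) < d - c := by linarith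
    set θm := (t - c)/(d - c) with hθmdef
    have hθm0 : 0 ≤ θm := div_nonneg (by linarith) hdc.le
    have hθm1 : θm ≤ 1 := by rw [hθmdef, div_le_one hdc]; linarith
    have hθmD : θm * (d - c) = t - c := div_mul_cancel₀ _ hdc.ne'
    have hθmD' : (1 - θm) * (d - c) = d - t := by linear_combination -hθmD
    have hIm : affExt C f t = (1-θm) * f c + θm * f d := by
      rw [affExt, if_neg htC]
    by_cases htB : t ∈ B
    · have hI : affExt B f t = f t := by rw [affExt, if_pos htB]
      obtain ⟨p, hpC, hpt⟩ := hdense t htB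
      obtain ⟨hp1, hp2⟩ := abs_le.mp hpt
      rw [hIm, hI]
      rcases le_total p t with hpt' | hpt'
      · -- p ≤ t so p ≤ c, hence t - c ≤ η
        have hpc : p ≤ c := hcmax p hpC hpt'
        have htc : t - c ≤ η := by linarith
        have h1 : |f c - f t| ≤ ε := hδ _ hcB _ htB (by rw [abs_le]; constructor <;> linarith)
        have h2 : θm * |f d - f c| ≤ 1 * ε := by
          refine twoscale (D := d - c) hM hM0 hδ hη2 hδpos hε0 hdB hcB ?_ hθm0 hθm1 ?_ le_rfl
          · rw [abs_le]; constructor <;> linarith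
          · rw [hθmD]; linarith
        have heq : (1-θm) * f c + θm * f d - f t = (f c - f t) + θm * (f d - f c) := by ring
        calc |(1-θm) * f c + θm * f d - f t|
            ≤ |f c - f t| + |θm * (f d - f c)| := by rw [heq]; exact abs_add_le _ _
          _ = |f c - f t| + θm * |f d - f c| := by rw [abs_mul, abs_of_nonneg hθm0]
          _ ≤ 5 * ε := by linarith
      · -- t ≤ p so d ≤ p, hence d - t ≤ η
        have hpd : d ≤ p := hdmin p hpC hpt'
        have htd' : d - t ≤ η := by linarith
        have h1 : |f d - f t| ≤ ε := hδ _ hdB _ htB (by rw [abs_le]; constructor <;> linarith)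
        have h2 : (1 - θm) * |f c - f d| ≤ 1 * ε := by
          refine twoscale (D := d - c) hM hM0 hδ hη2 hδpos hε0 hcB hdB ?_ (by linarith) (by linarith) ?_ le_rfl
          · rw [abs_le]; constructor <;> linarith
          · rw [hθmD']; linarith
        have heq : (1-θm) * f c + θm * f d - f t = (f d - f t) + (1 - θm) * (f c - f d) := by ring
        calc |(1-θm) * f c + θm * f d - f t|
            ≤ |f d - f t| + |(1-θm) * (f c - f d)| := by rw [heq]; exact abs_add_le _ _
          _ = |f d - f t| + (1-θm) * |f c - f d| := by
              rw [abs_mul, abs_of_nonneg (by linarith : (0:ℝ) ≤ 1 - θm)]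
          _ ≤ 5 * ε := by linarith
    · -- t ∉ B
      obtain ⟨hlB, hlt, hlmax⟩ := leftN_spec hBc h0B ht0
      obtain ⟨hrB, htr, hrmin⟩ := rightN_spec hBc h1B ht1
      set l := leftN B t with hl
      set r := rightN B t with hr
      have hllt : l < t := lt_of_le_of_ne hlt (fun h => htB (h ▸ hlB))
      have htlr : t < r := lt_of_le_of_ne htr (fun h => htB (h ▸ hrB))
      have hrl : (0:ℝ) < r - l := by linarith
      have hcl : c ≤ l := hlmax c hcB hct
      have hrd : r ≤ d := hrmin d hdB htd
      set θ := (t - l)/(r - l) with hθdef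
      have hθ0 : 0 ≤ θ := div_nonneg (by linarith) hrl.le
      have hθ1 : θ ≤ 1 := by rw [hθdef, div_le_one hrl]; linarith
      have hθD : θ * (r - l) = t - l := div_mul_cancel₀ _ hrl.ne'
      have hθD' : (1 - θ) * (r - l) = r - t := by linear_combination -hθD
      have hI : affExt B f t = (1-θ) * f l + θ * f r := by
        rw [affExt, if_neg htB]
      rw [hIm, hI]
      obtain ⟨p, hpC, hpl⟩ := hdense l hlB
      obtain ⟨hp1, hp2⟩ := abs_le.mp hpl
      have hp : p ≤ c ∨ d ≤ p := by
        rcases le_total p t with h | h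
        · exact Or.inl (hcmax p hpC h)
        · exact Or.inr (hdmin p hpC h)
      rcases hp with hp | hp
      · -- l - c ≤ η
        have hlc : l - c ≤ η := by linarith
        obtain ⟨q, hqC, hqr⟩ := hdense r hrB
        obtain ⟨hq1, hq2⟩ := abs_le.mp hqr
        have hq : q ≤ c ∨ d ≤ q := by
          rcases le_total q t with h | h
          · exact Or.inl (hcmax q hqC h)
          · exact Or.inr (hdmin q hqC h)
        rcases hq with hq | hq
        · -- r - c ≤ η : small cluster case, compare through f l
          have hrc : r - c ≤ η := by linarith
          have h1 : θm * |f d - f c| ≤ 1 * ε := by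
            refine twoscale (D := d - c) hM hM0 hδ hη2 hδpos hε0 hdB hcB ?_ hθm0 hθm1 ?_ le_rfl
            · rw [abs_le]; constructor <;> linarith
            · rw [hθmD]; linarith
          have h2 : |f c - f l| ≤ ε := hδ _ hcB _ hlB (by rw [abs_le]; constructor <;> linarith)
          have h3 : θ * |f l - f r| ≤ ε :=
            scale_abs (hδ _ hlB _ hrB (by rw [abs_le]; constructor <;> linarith))
              (abs_nonneg _) hθ0 hθ1
          have heq : ((1-θm) * f c + θm * f d) - ((1-θ) * f l + θ * f r)
              = θm * (f d - f c) + (f c - f l) + θ * (f l - f r) := by ring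
          calc |((1-θm) * f c + θm * f d) - ((1-θ) * f l + θ * f r)|
              ≤ |θm * (f d - f c)| + |f c - f l| + |θ * (f l - f r)| := by
                rw [heq]
                exact (abs_add_le _ _).trans (by gcongr; exact abs_add_le _ _)
            _ = θm * |f d - f c| + |f c - f l| + θ * |f l - f r| := by
                rw [abs_mul, abs_mul, abs_of_nonneg hθm0, abs_of_nonneg hθ0]
            _ ≤ 5 * ε := by linarith
        · -- main case: l - c ≤ η, d - r ≤ η
          have hdr : d - r ≤ η := by linarith
          have h1 : |f c - f l| ≤ ε := hδ _ hcB _ hlB (by rw [abs_le]; constructor <;> linarith)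
          have h2 : |f d - f r| ≤ ε := hδ _ hdB _ hrB (by rw [abs_le]; constructor <;> linarith)
          have hdiff : (θm - θ) * (d - c) = (l - c) - θ * ((d - c) - (r - l)) := by
            linear_combination hθmD - hθD
          have habs : |θm - θ| * (d - c) ≤ 3 * η := by
            have hX0 : (0:ℝ) ≤ (d - c) - (r - l) := by linarith
            have hX2 : (d - c) - (r - l) ≤ 2 * η := by linarith
            have hm1 : 0 ≤ θ * ((d - c) - (r - l)) := mul_nonneg hθ0 hX0
            have hm2 : θ * ((d - c) - (r - l)) ≤ 1 * ((d - c) - (r - l)) :=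
              mul_le_mul_of_nonneg_right hθ1 hX0
            have hb1 : (θm - θ) * (d - c) ≤ 3 * η := by rw [hdiff]; linarith
            have hb2 : -(3 * η) ≤ (θm - θ) * (d - c) := by rw [hdiff]; linarith
            calc |θm - θ| * (d - c) = |(θm - θ) * (d - c)| := by
                  rw [abs_mul, abs_of_nonneg hdc.le]
              _ ≤ 3 * η := abs_le.mpr ⟨hb2, hb1⟩
          have h3 : |θm - θ| * |f r - f l| ≤ 3 * ε := by
            refine twoscale (D := d - c) hM hM0 hδ hη2 hδpos hε0 hrB hlB ?_ (abs_nonneg _) ?_ habs (by norm_num)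
            · rw [abs_le]; constructor <;> linarith
            · exact abs_le.mpr ⟨by linarith, by linarith⟩
          have heq : ((1-θm) * f c + θm * f d) - ((1-θ) * f l + θ * f r)
              = (1-θm) * (f c - f l) + θm * (f d - f r) + (θm - θ) * (f r - f l) := by ring
          have hterm1 : (1-θm) * |f c - f l| ≤ ε :=
            scale_abs h1 (abs_nonneg _) (by linarith) (by linarith)
          have hterm2 : θm * |f d - f r| ≤ ε :=
            scale_abs h2 (abs_nonneg _) hθm0 hθm1
          calc |((1-θm) * f c + θm * f d) - ((1-θ) * f l + θ * f r)|
              ≤ |(1-θm) * (f c - f l)| + |θm * (f d - f r)| + |(θm - θ) * (f r - f l)| := by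
                rw [heq]
                exact (abs_add_le _ _).trans (by gcongr; exact abs_add_le _ _)
            _ = (1-θm) * |f c - f l| + θm * |f d - f r| + |θm - θ| * |f r - f l| := by
                rw [abs_mul, abs_mul, abs_mul, abs_of_nonneg hθm0,
                  abs_of_nonneg (by linarith : (0:ℝ) ≤ 1 - θm)]
            _ ≤ 5 * ε := by linarith
      · -- d ≤ p : d - l ≤ η, cluster case on the right
        have hdl : d - l ≤ η := by linarith
        have h1 : (1 - θm) * |f c - f d| ≤ 1 * ε := by
          refine twoscale (D := d - c) hM hM0 hδ hη2 hδpos hε0 hcB hdB ?_ (by linarith) (by linarith) ?_ le_rfl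
          · rw [abs_le]; constructor <;> linarith
          · rw [hθmD']; linarith
        have h2 : |f d - f r| ≤ ε := hδ _ hdB _ hrB (by rw [abs_le]; constructor <;> linarith)
        have h3 : (1 - θ) * |f r - f l| ≤ ε :=
          scale_abs (hδ _ hrB _ hlB (by rw [abs_le]; constructor <;> linarith))
            (abs_nonneg _) (by linarith) (by linarith)
        have heq : ((1-θm) * f c + θm * f d) - ((1-θ) * f l + θ * f r)
            = (1-θm) * (f c - f d) + (f d - f r) + (1-θ) * (f r - f l) := by ring
        calc |((1-θm) * f c + θm * f d) - ((1-θ) * f l + θ * f r)|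
            ≤ |(1-θm) * (f c - f d)| + |f d - f r| + |(1-θ) * (f r - f l)| := by
              rw [heq]
              exact (abs_add_le _ _).trans (by gcongr; exact abs_add_le _ _)
          _ = (1-θm) * |f c - f d| + |f d - f r| + (1-θ) * |f r - f l| := by
              rw [abs_mul, abs_mul, abs_of_nonneg (by linarith : (0:ℝ) ≤ 1 - θm),
                abs_of_nonneg (by linarith : (0:ℝ) ≤ 1 - θ)]
          _ ≤ 5 * ε := by linarith


/-- for a nested sequence of finite subsets `B_m ⊆ B` containing `0` and `1`
whose union is dense in `B`, the affine extensions `L_{B_m}(f|_{B_m})` converge uniformly on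
`[0,1]` to `L_B f`. -/
theorem stmt18 (B : Set ℝ) (hBsub : B ⊆ Set.Icc (0:ℝ) 1) (hBclosed : IsClosed B)
    (h0 : (0:ℝ) ∈ B) (h1 : (1:ℝ) ∈ B)
    (f : ℝ → ℝ) (hf : ContinuousOn f B)
    (Bm : ℕ → Set ℝ) (hfin : ∀ m, (Bm m).Finite)
    (hnest : ∀ m, Bm m ⊆ Bm (m + 1)) (hsubB : ∀ m, Bm m ⊆ B)
    (h0m : ∀ m, (0:ℝ) ∈ Bm m) (h1m : ∀ m, (1:ℝ) ∈ Bm m)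
    (hdense : B ⊆ closure (⋃ m, Bm m)) :
    TendstoUniformlyOn (fun m => affExt (Bm m) f) (affExt B f) Filter.atTop
      (Set.Icc (0:ℝ) 1) := by
  have hBcompact : IsCompact B := isCompact_Icc.of_isClosed_subset hBclosed hBsub
  rw [Metric.tendstoUniformlyOn_iff]
  intro ε' hε'
  obtain ⟨M₀, hM₀⟩ := hBcompact.exists_bound_of_continuousOn hf
  set M := max M₀ 0 with hMdef
  have hM : ∀ x ∈ B, |f x| ≤ M := fun x hx =>
    le_trans (by simpa [Real.norm_eq_abs] using hM₀ x hx) (le_max_left _ _)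
  have hM0 : (0:ℝ) ≤ M := le_max_right _ _
  set ε := ε' / 6 with hεdef
  have hεpos : 0 < ε := div_pos hε' (by norm_num)
  obtain ⟨δ₀, hδ₀pos, hδ₀⟩ := Metric.uniformContinuousOn_iff.mp
    (hBcompact.uniformContinuousOn_of_continuous hf) ε hεpos
  set δ := δ₀ / 2 with hδdef
  have hδpos : 0 < δ := by positivity
  have hδ : ∀ x ∈ B, ∀ y ∈ B, |x - y| ≤ δ → |f x - f y| ≤ ε := by
    intro x hx y hy h
    have h2 := hδ₀ x hx y hy (by rw [Real.dist_eq]; rw [hδdef] at h; linarith)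
    rw [Real.dist_eq] at h2; linarith
  set η := min δ (ε * δ / (2 * M + 1)) with hηdef
  have h2M : (0:ℝ) < 2 * M + 1 := by linarith
  have hηpos : 0 < η := lt_min hδpos (div_pos (mul_pos hεpos hδpos) h2M)
  have hη1 : η ≤ δ := min_le_left _ _
  have hη2 : η * (2 * M) ≤ ε * δ := by
    have hmin := min_le_right δ (ε * δ / (2 * M + 1))
    have hq : η * (2 * M + 1) ≤ ε * δ := (le_div_iff₀ h2M).mp hmin
    have : η * (2 * M) ≤ η * (2 * M + 1) :=
      mul_le_mul_of_nonneg_left (by linarith) hηpos.le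
    linarith
  have hcover : B ⊆ ⋃ p ∈ (⋃ m, Bm m), Metric.ball p η := by
    intro b hb
    obtain ⟨p, hpU, hpd⟩ := Metric.mem_closure_iff.mp (hdense hb) η hηpos
    exact Set.mem_biUnion hpU (Metric.mem_ball.mpr hpd)
  obtain ⟨b', hb'U, hb'fin, hb'cov⟩ :=
    hBcompact.elim_finite_subcover_image (fun p _ => Metric.isOpen_ball) hcover
  have hmono : Monotone Bm := monotone_nat_of_le_succ hnest
  have hchoice : ∀ p ∈ b', ∃ m, p ∈ Bm m := fun p hp => Set.mem_iUnion.mp (hb'U hp)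
  choose! mfun hmfun using hchoice
  obtain ⟨m0, hm0⟩ := (hb'fin.image mfun).bddAbove
  refine Filter.eventually_atTop.mpr ⟨m0, fun m hm => ?_⟩
  intro t htI
  have hdenseC : ∀ b ∈ B, ∃ p ∈ Bm m, |p - b| ≤ η := by
    intro b hb
    obtain ⟨p, hp, hbp⟩ := Set.mem_iUnion₂.mp (hb'cov hb)
    have hpm0 : mfun p ≤ m0 := hm0 (Set.mem_image_of_mem _ hp)
    refine ⟨p, hmono (hpm0.trans hm) (hmfun p hp), ?_⟩
    have hd := Metric.mem_ball.mp hbp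
    rw [Real.dist_eq] at hd
    rw [abs_sub_comm]
    exact hd.le
  have hkey := key hBclosed (hsubB m) ((hfin m).isClosed) (h0m m) (h1m m) hM0 hM
    hδpos hεpos.le hδ hη1 hη2 hdenseC htI.1 htI.2
  rw [Real.dist_eq, abs_sub_comm]
  calc |affExt (Bm m) f t - affExt B f t| ≤ 5 * ε := hkey
    _ < ε' := by rw [hεdef]; linarith
end
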